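/- Let d be a smooth function with |∇d| = 1 near Γ = {d = 0} in ℝ³, H = Δd/2 the mean curvature and K the Gaussian curvature of the level sets. Define c = (Δd)²/2 + ∇d·∇(Δd). Then on Γ, c = −2(H² − K), and consequently the 3D Willmore velocity W = Δ_Γ H + 2H(H² − K) satisfies W = Δ²d/2 + H c on Γ, where Δ_Γ H = Δ(H∘p)|_Γ with p the projection onto Γ. -/

import Mathlib

open scoped BigOperators

/-- Partial derivative in direction `i`. -/
noncomputable def pd {n : ℕ} (i : Fin n) (f : (Fin n → ℝ) → ℝ) : (Fin n → ℝ) → ℝ :=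
  fun x => fderiv ℝ f x (Pi.single i 1)

/-- Laplacian. -/
noncomputable def lap {n : ℕ} (f : (Fin n → ℝ) → ℝ) : (Fin n → ℝ) → ℝ :=
  fun x => ∑ i, pd i (pd i f) x

/-- Hessian matrix. -/
noncomputable def hess {n : ℕ} (f : (Fin n → ℝ) → ℝ) (x : Fin n → ℝ) :
    Matrix (Fin n) (Fin n) ℝ :=
  Matrix.of fun i j => pd i (pd j f) x

/-- Projection onto the zero level set: `p(x) = x − d(x) ∇d(x)`. -/
noncomputable def proj {n : ℕ} (d : (Fin n → ℝ) → ℝ) (x : Fin n → ℝ) : Fin n → ℝ :=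
  fun i => x i - d x * pd i d x

/-- Gaussian curvature: the product of the two nonzero eigenvalues of the Hessian,
characterised by `Tr[(∇²d)²] = (Δd)² − 2K`. -/
noncomputable def gaussK {n : ℕ} (d : (Fin n → ℝ) → ℝ) (x : Fin n → ℝ) : ℝ :=
  ((lap d x) ^ 2 - Matrix.trace (hess d x * hess d x)) / 2

/-- Mean curvature `H = Δd / 2` in 3D. -/
noncomputable def meanH (d : (Fin 3 → ℝ) → ℝ) (x : Fin 3 → ℝ) : ℝ := lap d x / 2

/-- Correction term `c = (Δd)²/2 + ∇d·∇(Δd)`. -/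
noncomputable def corr (d : (Fin 3 → ℝ) → ℝ) (x : Fin 3 → ℝ) : ℝ :=
  (lap d x) ^ 2 / 2 + ∑ i, pd i d x * pd i (lap d) x

lemma contDiffAt_pd {n : ℕ} {f : (Fin n → ℝ) → ℝ} {x} (hf : ContDiffAt ℝ (⊤ : ℕ∞) f x) (i : Fin n) :
    ContDiffAt ℝ (⊤ : ℕ∞) (pd i f) x := by
  have h := hf.fderiv_right (m := (⊤ : ℕ∞)) (by simp)
  exact h.clm_apply contDiffAt_const

lemma pd_comm {n : ℕ} {f : (Fin n → ℝ) → ℝ} {x} (hf : ContDiffAt ℝ (⊤ : ℕ∞) f x) (i j : Fin n) :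
    pd i (pd j f) x = pd j (pd i f) x := by
  have hsymm := hf.isSymmSndFDerivAt (by simp only [minSmoothness_of_isRCLikeNormedField]; exact WithTop.coe_le_coe.mpr le_top)
  have hdiff : DifferentiableAt ℝ (fderiv ℝ f) x :=
    (hf.fderiv_right (m := (⊤ : ℕ∞)) (by simp)).differentiableAt (by simp)
  have key : ∀ k l : Fin n, pd k (pd l f) x
      = fderiv ℝ (fderiv ℝ f) x (Pi.single k 1) (Pi.single l 1) := by
    intro k l
    have : pd l f = fun y => (fderiv ℝ f y) ((fun _ : Fin n → ℝ => (Pi.single l 1 : Fin n → ℝ)) y) := rfl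
    simp only [pd, this]
    rw [fderiv_clm_apply hdiff (differentiableAt_const _)]
    simp
  rw [key i j, key j i, hsymm.eq]

lemma pd_congr {n : ℕ} {f g : (Fin n → ℝ) → ℝ} {x} (h : f =ᶠ[nhds x] g) (i : Fin n) :
    pd i f x = pd i g x := by
  simp only [pd, h.fderiv_eq]

lemma pd_const {n : ℕ} (c : ℝ) (x) (i : Fin n) : pd i (fun _ => c) x = 0 := by
  simp [pd]

lemma pd_mul {n : ℕ} {f g : (Fin n → ℝ) → ℝ} {x} (hf : DifferentiableAt ℝ f x)
    (hg : DifferentiableAt ℝ g x) (i : Fin n) :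
    pd i (fun y => f y * g y) x = pd i f x * g x + f x * pd i g x := by
  simp only [pd]
  rw [fderiv_fun_mul hf hg]
  simp [smul_eq_mul]
  ring

lemma pd_add {n : ℕ} {f g : (Fin n → ℝ) → ℝ} {x} (hf : DifferentiableAt ℝ f x)
    (hg : DifferentiableAt ℝ g x) (i : Fin n) :
    pd i (fun y => f y + g y) x = pd i f x + pd i g x := by
  simp only [pd]
  rw [fderiv_fun_add hf hg]
  simp

lemma pd_neg {n : ℕ} {f : (Fin n → ℝ) → ℝ} {x} (i : Fin n) :
    pd i (fun y => -f y) x = -pd i f x := by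
  simp only [pd, fderiv_neg]
  simp

lemma pd_sum {n : ℕ} {m : Type*} [Fintype m] {f : m → (Fin n → ℝ) → ℝ} {x}
    (hf : ∀ j, DifferentiableAt ℝ (f j) x) (i : Fin n) :
    pd i (fun y => ∑ j, f j y) x = ∑ j, pd i (f j) x := by
  simp only [pd]
  rw [fderiv_fun_sum (fun j _ => hf j)]
  simp

lemma pd_sub {n : ℕ} {f g : (Fin n → ℝ) → ℝ} {x} (hf : DifferentiableAt ℝ f x)
    (hg : DifferentiableAt ℝ g x) (i : Fin n) :
    pd i (fun y => f y - g y) x = pd i f x - pd i g x := by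
  simp only [pd]
  rw [fderiv_fun_sub hf hg]
  simp

lemma pd_div_const {n : ℕ} {f : (Fin n → ℝ) → ℝ} {x} (hf : DifferentiableAt ℝ f x) (c : ℝ) (i : Fin n) :
    pd i (fun y => f y / c) x = pd i f x / c := by
  simp only [pd, div_eq_mul_inv]
  rw [fderiv_mul_const hf]
  simp [smul_eq_mul, mul_comm]

lemma pd_coord {n : ℕ} (j : Fin n) (x) (i : Fin n) :
    pd i (fun y => y j) x = if i = j then 1 else 0 := by
  have : (fun y : Fin n → ℝ => y j) = (ContinuousLinearMap.proj j : (Fin n → ℝ) →L[ℝ] ℝ) := rfl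
  simp only [pd, this, ContinuousLinearMap.fderiv]
  simp [ContinuousLinearMap.proj_apply, Pi.single_apply, eq_comm]

lemma clm_eval {n : ℕ} (L : (Fin n → ℝ) →L[ℝ] ℝ) (v : Fin n → ℝ) :
    L v = ∑ j, v j * L (Pi.single j 1) := by
  have hv : v = ∑ j, v j • (Pi.single j 1 : Fin n → ℝ) := by
    funext k
    simp [Finset.sum_apply, Pi.single_apply]
  conv_lhs => rw [hv]
  rw [map_sum]
  simp [smul_eq_mul]

lemma pd_comp {n : ℕ} (f : (Fin n → ℝ) → ℝ) (p : (Fin n → ℝ) → (Fin n → ℝ)) (x) (i : Fin n)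
    (hf : DifferentiableAt ℝ f (p x)) (hp : ∀ j, DifferentiableAt ℝ (fun y => p y j) x) :
    pd i (fun y => f (p y)) x = ∑ j, pd j f (p x) * pd i (fun y => p y j) x := by
  have hp' : DifferentiableAt ℝ p x := differentiableAt_pi.mpr hp
  have hcomp : fderiv ℝ (fun y => f (p y)) x = (fderiv ℝ f (p x)).comp (fderiv ℝ p x) :=
    fderiv_comp x hf hp'
  have hpi : fderiv ℝ p x = ContinuousLinearMap.pi (fun j => fderiv ℝ (fun y => p y j) x) :=
    fderiv_pi hp
  simp only [pd, hcomp, ContinuousLinearMap.comp_apply]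
  rw [clm_eval (fderiv ℝ f (p x))]
  congr 1
  funext j
  rw [hpi]
  simp [ContinuousLinearMap.pi_apply, mul_comm]

section main
variable {U : Set (Fin 3 → ℝ)} (hU : IsOpen U) {d : (Fin 3 → ℝ) → ℝ}
  (hsmd : ∀ y ∈ U, ContDiffAt ℝ (⊤ : ℕ∞) d y)
  (heik : ∀ x ∈ U, ∑ i, (pd i d x) ^ 2 = 1)
include hU hsmd

lemma smlap : ∀ y ∈ U, ContDiffAt ℝ (⊤ : ℕ∞) (lap d) y := by
  intro y hy
  have : ContDiffAt ℝ (⊤ : ℕ∞) (fun z => ∑ i, pd i (pd i d) z) y :=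
    ContDiffAt.sum fun i _ => contDiffAt_pd (contDiffAt_pd (hsmd y hy) i) i
  exact this

include heik in
lemma hAn : ∀ y ∈ U, ∀ i, ∑ j, pd j d y * pd i (pd j d) y = 0 := by
  intro y hy i
  have heq : (fun z => ∑ j, (pd j d z) ^ 2) =ᶠ[nhds y] (fun _ => (1 : ℝ)) :=
    Filter.eventually_of_mem (hU.mem_nhds hy) heik
  have hdj : ∀ j : Fin 3, DifferentiableAt ℝ (pd j d) y :=
    fun j => (contDiffAt_pd (hsmd y hy) j).differentiableAt (by simp)
  have h0 : pd i (fun z => ∑ j, (pd j d z) ^ 2) y = 0 := by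
    rw [pd_congr heq i, pd_const]
  have h1 : pd i (fun z => ∑ j, (pd j d z) ^ 2) y
      = ∑ j, (2 * (pd j d y * pd i (pd j d) y)) := by
    rw [pd_sum (fun j => (hdj j).fun_pow 2) i]
    refine Finset.sum_congr rfl fun j _ => ?_
    have hfun : (fun z => (pd j d z) ^ 2) = fun z => pd j d z * pd j d z := by
      funext z; ring
    rw [hfun, pd_mul (hdj j) (hdj j)]
    ring
  rw [h0, ← Finset.mul_sum] at h1
  linarith

include heik in
lemma hAn' : ∀ y ∈ U, ∀ i, ∑ j, pd j d y * pd j (pd i d) y = 0 := by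
  intro y hy i
  have := hAn hU hsmd heik y hy i
  rw [← this]
  exact Finset.sum_congr rfl fun j _ => by rw [pd_comm (hsmd y hy) j i]

include heik in
lemma hT3 : ∀ y ∈ U, ∀ k i, ∑ j, (pd k (pd j d) y * pd j (pd i d) y
    + pd j d y * pd k (pd j (pd i d)) y) = 0 := by
  intro y hy k i
  have heq : (fun z => ∑ j, pd j d z * pd j (pd i d) z) =ᶠ[nhds y] (fun _ => (0 : ℝ)) :=
    Filter.eventually_of_mem (hU.mem_nhds hy) (fun z hz => hAn' hU hsmd heik z hz i)
  have hdj : ∀ j : Fin 3, DifferentiableAt ℝ (pd j d) y :=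
    fun j => (contDiffAt_pd (hsmd y hy) j).differentiableAt (by simp)
  have hdji : ∀ j : Fin 3, DifferentiableAt ℝ (pd j (pd i d)) y :=
    fun j => (contDiffAt_pd (contDiffAt_pd (hsmd y hy) i) j).differentiableAt (by simp)
  have h0 : pd k (fun z => ∑ j, pd j d z * pd j (pd i d) z) y = 0 := by
    rw [pd_congr heq k, pd_const]
  rw [pd_sum (fun j => (hdj j).fun_mul (hdji j)) k] at h0
  rw [← h0]
  exact Finset.sum_congr rfl fun j _ => by rw [pd_mul (hdj j) (hdji j)]

include heik in
lemma hF1 : ∀ y ∈ U, ∑ k, pd k d y * pd k (lap d) y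
    = -∑ i, ∑ j, pd i (pd j d) y * pd j (pd i d) y := by
  intro y hy
  have hlapk : ∀ k : Fin 3, pd k (lap d) y = ∑ i, pd k (pd i (pd i d)) y := by
    intro k
    have : lap d = fun z => ∑ i, pd i (pd i d) z := rfl
    rw [this, pd_sum (fun i =>
      (contDiffAt_pd (contDiffAt_pd (hsmd y hy) i) i).differentiableAt (by simp)) k]
  calc ∑ k, pd k d y * pd k (lap d) y
      = ∑ k, ∑ i, pd k d y * pd k (pd i (pd i d)) y := by
        refine Finset.sum_congr rfl fun k _ => ?_
        rw [hlapk k, Finset.mul_sum]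
    _ = ∑ i, ∑ k, pd k d y * pd k (pd i (pd i d)) y := Finset.sum_comm
    _ = ∑ i, ∑ k, pd k d y * pd i (pd k (pd i d)) y := by
        refine Finset.sum_congr rfl fun i _ => Finset.sum_congr rfl fun k _ => ?_
        rw [pd_comm (contDiffAt_pd (hsmd y hy) i) k i]
    _ = ∑ i, -∑ j, pd i (pd j d) y * pd j (pd i d) y := by
        refine Finset.sum_congr rfl fun i _ => ?_
        have h := hT3 hU hsmd heik y hy i i
        rw [Finset.sum_add_distrib] at h
        linarith
    _ = -∑ i, ∑ j, pd i (pd j d) y * pd j (pd i d) y := by rw [← Finset.sum_neg_distrib]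

end main

section main2
variable {U : Set (Fin 3 → ℝ)} (hU : IsOpen U) {d : (Fin 3 → ℝ) → ℝ}
  (hsmd : ∀ y ∈ U, ContDiffAt ℝ (⊤ : ℕ∞) d y)
  (heik : ∀ x ∈ U, ∑ i, (pd i d x) ^ 2 = 1)
  {x : Fin 3 → ℝ} (hx : x ∈ U)
include hU hsmd heik hx

-- contraction of n with third derivatives
lemma hNT : ∀ a b : Fin 3, ∑ i, pd i d x * pd i (pd a (pd b d)) x
    = -∑ c, pd a (pd c d) x * pd c (pd b d) x := by
  intro a b
  have h := hT3 hU hsmd heik x hx a b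
  rw [Finset.sum_add_distrib] at h
  have hcomm : ∀ i : Fin 3, pd i (pd a (pd b d)) x = pd a (pd i (pd b d)) x :=
    fun i => pd_comm (contDiffAt_pd (hsmd x hx) b) i a
  calc ∑ i, pd i d x * pd i (pd a (pd b d)) x
      = ∑ i, pd i d x * pd a (pd i (pd b d)) x := by
        exact Finset.sum_congr rfl fun i _ => by rw [hcomm i]
    _ = -∑ c, pd a (pd c d) x * pd c (pd b d) x := by linarith

lemma hQ : ∑ i, ∑ k, pd i d x * pd k d x * pd i (pd k (lap d)) x
    = ∑ a, ∑ b, ((∑ c, pd a (pd c d) x * pd c (pd b d) x) * pd b (pd a d) x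
      + pd a (pd b d) x * (∑ c, pd b (pd c d) x * pd c (pd a d) x)) := by
  have hdiff1 : ∀ (j : Fin 3) (f : (Fin 3 → ℝ) → ℝ), ContDiffAt ℝ (⊤ : ℕ∞) f x →
      DifferentiableAt ℝ (pd j f) x :=
    fun j f hf => (contDiffAt_pd hf j).differentiableAt (by simp)
  have hsdx := hsmd x hx
  have hslap := smlap hU hsmd x hx
  -- G and G'
  have hGG' : (fun z => ∑ k, pd k d z * pd k (lap d) z)
      =ᶠ[nhds x] (fun z => -∑ a, ∑ b, pd a (pd b d) z * pd b (pd a d) z) :=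
    Filter.eventually_of_mem (hU.mem_nhds hx) (fun z hz => hF1 hU hsmd heik z hz)
  have hL : ∀ i : Fin 3, pd i (fun z => ∑ k, pd k d z * pd k (lap d) z) x
      = ∑ k, (pd i (pd k d) x * pd k (lap d) x + pd k d x * pd i (pd k (lap d)) x) := by
    intro i
    rw [pd_sum (fun k => (hdiff1 k d hsdx).fun_mul (hdiff1 k _ hslap)) i]
    exact Finset.sum_congr rfl fun k _ => by
      rw [pd_mul (hdiff1 k d hsdx) (hdiff1 k _ hslap)]
  have hR : ∀ i : Fin 3, pd i (fun z => -∑ a, ∑ b, pd a (pd b d) z * pd b (pd a d) z) x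
      = -∑ a, ∑ b, (pd i (pd a (pd b d)) x * pd b (pd a d) x
          + pd a (pd b d) x * pd i (pd b (pd a d)) x) := by
    intro i
    have hdab : ∀ a b : Fin 3, DifferentiableAt ℝ (fun z => pd a (pd b d) z * pd b (pd a d) z) x :=
      fun a b => (hdiff1 a _ (contDiffAt_pd hsdx b)).mul (hdiff1 b _ (contDiffAt_pd hsdx a))
    rw [pd_neg, pd_sum (fun a => DifferentiableAt.fun_sum (fun b _ => hdab a b)) i]
    congr 1
    refine Finset.sum_congr rfl fun a _ => ?_
    rw [pd_sum (fun b => hdab a b) i]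
    refine Finset.sum_congr rfl fun b _ => ?_
    rw [pd_mul (hdiff1 a _ (contDiffAt_pd hsdx b)) (hdiff1 b _ (contDiffAt_pd hsdx a))]
  have hkey : ∀ i : Fin 3,
      ∑ k, (pd i (pd k d) x * pd k (lap d) x + pd k d x * pd i (pd k (lap d)) x)
      = -∑ a, ∑ b, (pd i (pd a (pd b d)) x * pd b (pd a d) x
          + pd a (pd b d) x * pd i (pd b (pd a d)) x) := by
    intro i
    rw [← hL i, ← hR i]
    exact pd_congr hGG' i
  have hkey' := hkey
  have hnt := hNT hU hsmd heik hx
  have han := hAn' hU hsmd heik x hx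
  simp only [Fin.sum_univ_three] at hkey' hnt han ⊢
  linear_combination pd 0 d x * hkey' 0 + pd 1 d x * hkey' 1 + pd 2 d x * hkey' 2 - (pd 0 (pd 0 d) x * hnt 0 0 + pd 1 (pd 0 d) x * hnt 0 1 + pd 2 (pd 0 d) x * hnt 0 2 + pd 0 (pd 1 d) x * hnt 1 0 + pd 1 (pd 1 d) x * hnt 1 1 + pd 2 (pd 1 d) x * hnt 1 2 + pd 0 (pd 2 d) x * hnt 2 0 + pd 1 (pd 2 d) x * hnt 2 1 + pd 2 (pd 2 d) x * hnt 2 2) - (pd 0 (pd 0 d) x * hnt 0 0 + pd 0 (pd 1 d) x * hnt 1 0 + pd 0 (pd 2 d) x * hnt 2 0 + pd 1 (pd 0 d) x * hnt 0 1 + pd 1 (pd 1 d) x * hnt 1 1 + pd 1 (pd 2 d) x * hnt 2 1 + pd 2 (pd 0 d) x * hnt 0 2 + pd 2 (pd 1 d) x * hnt 1 2 + pd 2 (pd 2 d) x * hnt 2 2) - (pd 0 (lap d) x * han 0 + pd 1 (lap d) x * han 1 + pd 2 (lap d) x * han 2)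

end main2

section main3
variable {U : Set (Fin 3 → ℝ)} (hU : IsOpen U) {d : (Fin 3 → ℝ) → ℝ}
  (hsmd : ∀ y ∈ U, ContDiffAt ℝ (⊤ : ℕ∞) d y)
  (heik : ∀ x ∈ U, ∑ i, (pd i d x) ^ 2 = 1)
  {x : Fin 3 → ℝ} (hx : x ∈ U)
include hU hsmd heik hx

lemma hdet0 : (hess d x).det = 0 := by
  rw [← Matrix.exists_mulVec_eq_zero_iff]
  refine ⟨fun i => pd i d x, ?_, ?_⟩
  · intro h0
    have h1 := heik x hx
    have h2 : ∀ i : Fin 3, pd i d x = 0 := fun i => congrFun h0 i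
    simp [h2] at h1
  · funext i
    have h := hAn hU hsmd heik x hx i
    simp only [Matrix.mulVec, dotProduct, hess, Matrix.of_apply, Pi.zero_apply]
    rw [← h]
    exact Finset.sum_congr rfl fun j _ => mul_comm _ _

lemma htr3 : ∑ a, ∑ b, ∑ c, pd a (pd b d) x * pd b (pd c d) x * pd c (pd a d) x
    = (3 * (∑ i, pd i (pd i d) x) * (∑ i, ∑ j, pd i (pd j d) x * pd j (pd i d) x)
      - (∑ i, pd i (pd i d) x) ^ 3) / 2 := by
  have h := hdet0 hU hsmd heik hx
  rw [Matrix.det_fin_three] at h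
  simp only [hess, Matrix.of_apply] at h
  simp only [Fin.sum_univ_three]
  linear_combination 3 * h

end main3

section main4
variable {U : Set (Fin 3 → ℝ)} (hU : IsOpen U) {d : (Fin 3 → ℝ) → ℝ}
  (hsmd : ∀ y ∈ U, ContDiffAt ℝ (⊤ : ℕ∞) d y)
  {x : Fin 3 → ℝ} (hx : x ∈ U) (hx0 : d x = 0)
include hU hsmd hx hx0

lemma hlapHp : lap (fun y => meanH d (proj d y)) x
    = ∑ i, ∑ j, ((∑ k, pd k (pd j (lap d)) x / 2 * ((if i = k then (1:ℝ) else 0) - pd i d x * pd k d x))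
        * ((if i = j then (1:ℝ) else 0) - pd i d x * pd j d x)
      + pd j (lap d) x / 2
        * (-(pd i (pd i d) x * pd j d x + 2 * (pd i d x * pd i (pd j d) x)))) := by
  have hprojx : proj d x = x := by
    funext i; simp [proj, hx0]
  have hsmproj : ∀ (j : Fin 3), ∀ y ∈ U, ContDiffAt ℝ (⊤ : ℕ∞) (fun z => proj d z j) y := by
    intro j y hy
    have heq : (fun z : Fin 3 → ℝ => proj d z j) = fun z => z j - d z * pd j d z := rfl
    rw [heq]
    have h1 : ContDiffAt ℝ (⊤ : ℕ∞) (fun z : Fin 3 → ℝ => z j) y :=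
      (ContinuousLinearMap.proj j : ((Fin 3 → ℝ)) →L[ℝ] ℝ).contDiff.contDiffAt
    exact h1.sub ((hsmd y hy).mul (contDiffAt_pd (hsmd y hy) j))
  have hsmH : ∀ y ∈ U, ContDiffAt ℝ (⊤ : ℕ∞) (meanH d) y := by
    intro y hy
    have heq : meanH d = fun z => lap d z / 2 := rfl
    rw [heq]
    exact (smlap hU hsmd y hy).div_const 2
  have hpU : ∀ᶠ y in nhds x, y ∈ U ∧ proj d y ∈ U := by
    have hc : ContinuousAt (proj d) x := by
      rw [continuousAt_pi]
      exact fun j => (hsmproj j x hx).continuousAt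
    have h2 : (proj d) ⁻¹' U ∈ nhds x := hc.preimage_mem_nhds (by rw [hprojx]; exact hU.mem_nhds hx)
    exact (Filter.eventually_of_mem (hU.mem_nhds hx) fun z hz => hz).and
      (Filter.eventually_of_mem h2 fun z hz => hz)
  have hchain : ∀ i : Fin 3, (pd i (fun z => meanH d (proj d z)))
      =ᶠ[nhds x] (fun y => ∑ j, pd j (meanH d) (proj d y) * pd i (fun z => proj d z j) y) := by
    intro i
    filter_upwards [hpU] with y hy
    exact pd_comp (meanH d) (proj d) y i ((hsmH _ hy.2).differentiableAt (by simp))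
      (fun j => (hsmproj j y hy.1).differentiableAt (by simp))
  -- values of q i j and its derivative at x
  have hq_eq : ∀ i j : Fin 3, ∀ y ∈ U, pd i (fun z => proj d z j) y
      = (if i = j then (1:ℝ) else 0) - (pd i d y * pd j d y + d y * pd i (pd j d) y) := by
    intro i j y hy
    have heq : (fun z : Fin 3 → ℝ => proj d z j) = fun z => z j - d z * pd j d z := rfl
    rw [heq, pd_sub (show DifferentiableAt ℝ (fun z : Fin 3 → ℝ => z j) y from
        (ContinuousLinearMap.proj j : ((Fin 3 → ℝ)) →L[ℝ] ℝ).differentiable.differentiableAt)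
      (((hsmd y hy).differentiableAt (by simp)).fun_mul ((contDiffAt_pd (hsmd y hy) j).differentiableAt (by simp))),
      pd_coord, pd_mul ((hsmd y hy).differentiableAt (by simp))
        ((contDiffAt_pd (hsmd y hy) j).differentiableAt (by simp))]
  have hqx : ∀ i j : Fin 3, pd i (fun z => proj d z j) x
      = (if i = j then (1:ℝ) else 0) - pd i d x * pd j d x := by
    intro i j
    rw [hq_eq i j x hx, hx0]
    ring
  have hdq : ∀ i j : Fin 3, pd i (pd i (fun z => proj d z j)) x
      = -(pd i (pd i d) x * pd j d x + 2 * (pd i d x * pd i (pd j d) x)) := by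
    intro i j
    have heq2 : (pd i (fun z => proj d z j)) =ᶠ[nhds x]
        (fun y => (if i = j then (1:ℝ) else 0) - (pd i d y * pd j d y + d y * pd i (pd j d) y)) :=
      Filter.eventually_of_mem (hU.mem_nhds hx) (hq_eq i j)
    have hd1 : DifferentiableAt ℝ (pd i d) x := (contDiffAt_pd (hsmd x hx) i).differentiableAt (by simp)
    have hd2 : DifferentiableAt ℝ (pd j d) x := (contDiffAt_pd (hsmd x hx) j).differentiableAt (by simp)
    have hd3 : DifferentiableAt ℝ (pd i (pd j d)) x :=
      (contDiffAt_pd (contDiffAt_pd (hsmd x hx) j) i).differentiableAt (by simp)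
    have hdd : DifferentiableAt ℝ d x := (hsmd x hx).differentiableAt (by simp)
    rw [pd_congr heq2 i, pd_sub (differentiableAt_const _) ((hd1.fun_mul hd2).fun_add (hdd.fun_mul hd3)),
      pd_const, pd_add (hd1.fun_mul hd2) (hdd.fun_mul hd3), pd_mul hd1 hd2, pd_mul hdd hd3, hx0,
      pd_comm (hsmd x hx) i j]
    ring
  -- derivative of pd j (meanH d)
  have hsmlapx := smlap hU hsmd x hx
  have hmH_pd : ∀ j : Fin 3, ∀ y ∈ U, pd j (meanH d) y = pd j (lap d) y / 2 := by
    intro j y hy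
    have heq : meanH d = fun z => lap d z / 2 := rfl
    rw [heq, pd_div_const ((smlap hU hsmd y hy).differentiableAt (by simp))]
  have hmH_pd2 : ∀ k j : Fin 3, pd k (pd j (meanH d)) x = pd k (pd j (lap d)) x / 2 := by
    intro k j
    have heq2 : (pd j (meanH d)) =ᶠ[nhds x] (fun y => pd j (lap d) y / 2) :=
      Filter.eventually_of_mem (hU.mem_nhds hx) (hmH_pd j)
    rw [pd_congr heq2 k, pd_div_const ((contDiffAt_pd hsmlapx j).differentiableAt (by simp))]
  -- main assembly
  have hmain : ∀ i : Fin 3, pd i (pd i (fun z => meanH d (proj d z))) x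
      = ∑ j, ((∑ k, pd k (pd j (lap d)) x / 2 * ((if i = k then (1:ℝ) else 0) - pd i d x * pd k d x))
          * ((if i = j then (1:ℝ) else 0) - pd i d x * pd j d x)
        + pd j (lap d) x / 2
          * (-(pd i (pd i d) x * pd j d x + 2 * (pd i d x * pd i (pd j d) x)))) := by
    intro i
    rw [pd_congr (hchain i) i]
    have hdg1 : ∀ j : Fin 3, DifferentiableAt ℝ (fun y => pd j (meanH d) (proj d y)) x := by
      intro j
      have h1 : DifferentiableAt ℝ (pd j (meanH d)) (proj d x) := by
        rw [hprojx]
        exact (contDiffAt_pd (hsmH x hx) j).differentiableAt (by simp)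
      have h2 : DifferentiableAt ℝ (proj d) x :=
        differentiableAt_pi.mpr (fun j => (hsmproj j x hx).differentiableAt (by simp))
      exact h1.comp x h2
    have hdq1 : ∀ j : Fin 3, DifferentiableAt ℝ (pd i (fun z => proj d z j)) x :=
      fun j => (contDiffAt_pd (hsmproj j x hx) i).differentiableAt (by simp)
    rw [pd_sum (fun j => (hdg1 j).fun_mul (hdq1 j)) i]
    refine Finset.sum_congr rfl fun j _ => ?_
    rw [pd_mul (hdg1 j) (hdq1 j)]
    have hcompj : pd i (fun y => pd j (meanH d) (proj d y)) x
        = ∑ k, pd k (pd j (meanH d)) (proj d x) * pd i (fun z => proj d z k) x := by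
      exact pd_comp (pd j (meanH d)) (proj d) x i
        (by rw [hprojx]; exact (contDiffAt_pd (hsmH x hx) j).differentiableAt (by simp))
        (fun k => (hsmproj k x hx).differentiableAt (by simp))
    rw [hcompj, hprojx, hdq i j, hmH_pd j x hx, hqx i j]
    congr 1
    congr 1
    exact Finset.sum_congr rfl fun k _ => by rw [hmH_pd2 k j, hqx i k]
  have hlap_eq : lap (fun y => meanH d (proj d y)) x
      = ∑ i, pd i (pd i (fun z => meanH d (proj d z))) x := rfl
  rw [hlap_eq]
  exact Finset.sum_congr rfl fun i _ => hmain i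

end main4

theorem stmt_15 (U : Set (Fin 3 → ℝ)) (hU : IsOpen U)
    (d : (Fin 3 → ℝ) → ℝ) (hd : ContDiffOn ℝ (⊤ : ℕ∞) d U)
    (heik : ∀ x ∈ U, ∑ i, (pd i d x) ^ 2 = 1) :
    ∀ x ∈ U, d x = 0 →
      corr d x = -2 * ((meanH d x) ^ 2 - gaussK d x)
      ∧ lap (fun y => meanH d (proj d y)) x
          + 2 * meanH d x * ((meanH d x) ^ 2 - gaussK d x)
        = lap (lap d) x / 2 + meanH d x * corr d x := by
  intro x hx hx0
  have hsmd : ∀ y ∈ U, ContDiffAt ℝ (⊤ : ℕ∞) d y := fun y hy => hd.contDiffAt (hU.mem_nhds hy)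
  have hf1 := hF1 hU hsmd heik x hx
  have htr : Matrix.trace (hess d x * hess d x)
      = ∑ i, ∑ j, pd i (pd j d) x * pd j (pd i d) x := by
    simp [Matrix.trace, Matrix.mul_apply, hess, Matrix.diag]
  constructor
  · simp only [corr, meanH, gaussK]
    rw [htr]
    simp only [Fin.sum_univ_three] at hf1 ⊢
    linear_combination hf1
  · have hlh := hlapHp hU hsmd hx hx0
    have hq := hQ hU hsmd heik hx
    have ht3 := htr3 hU hsmd heik hx
    have hsy : ∀ i j : Fin 3, pd i (pd j d) x = pd j (pd i d) x :=
      fun i j => pd_comm (hsmd x hx) i j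
    have han := hAn hU hsmd heik x hx
    have he := heik x hx
    have hll : lap (lap d) x = ∑ i, pd i (pd i (lap d)) x := rfl
    have hkap : lap d x = ∑ i, pd i (pd i d) x := rfl
    rw [hlh]
    simp only [meanH, gaussK, corr]
    rw [htr, hll, hkap]
    simp only [Fin.sum_univ_three, Fin.reduceEq, reduceIte, if_true, if_false] at han hf1 hq ht3 he ⊢
    linear_combination ((pd 0 d x * pd 0 d x * pd 0 (pd 0 (lap d)) x + pd 0 d x * pd 1 d x * pd 0 (pd 1 (lap d)) x + pd 0 d x * pd 2 d x * pd 0 (pd 2 (lap d)) x + pd 1 d x * pd 0 d x * pd 1 (pd 0 (lap d)) x + pd 1 d x * pd 1 d x * pd 1 (pd 1 (lap d)) x + pd 1 d x * pd 2 d x * pd 1 (pd 2 (lap d)) x + pd 2 d x * pd 0 d x * pd 2 (pd 0 (lap d)) x + pd 2 d x * pd 1 d x * pd 2 (pd 1 (lap d)) x + pd 2 d x * pd 2 d x * pd 2 (pd 2 (lap d)) x) / 2) * he - (pd 0 (pd 0 d) x + pd 1 (pd 1 d) x + pd 2 (pd 2 d) x) * hf1 - (1/2) * hq - ht3 - pd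 0 (lap d) x * han 0 - pd 1 (lap d) x * han 1 - pd 2 (lap d) x * han 2 - (pd 1 (lap d) x * pd 0 d x - pd 0 (lap d) x * pd 1 d x) * hsy 0 1 - (pd 2 (lap d) x * pd 0 d x - pd 0 (lap d) x * pd 2 d x) * hsy 0 2 - (pd 2 (lap d) x * pd 1 d x - pd 1 (lap d) x * pd 2 d x) * hsy 1 2
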